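/- arXiv:2504.09569 — 4 statements merged into one kernel-verified Lean document; each statement's English description precedes it below -/
import Mathlib

section
/- The left q-difference operators satisfy the Weyl relations: xᵢᴸ ∂ⱼᴸ − q⁻¹ ∂ⱼᴸ xᵢᴸ = 0 for i < j, and xᵢᴸ ∂ᵢᴸ − q⁻¹ ∂ᵢᴸ xᵢᴸ = −q⁻¹ γᵢ⁻¹. -/
noncomputable section

/-- Multi-indices for `n` q-commuting variables. -/
abbrev QIdx (n : ℕ) := Fin n →₀ ℕ

/-- A polynomial in the q-commutative algebra `A = ℂ⟨x₁,…,xₙ⟩/(xᵢxⱼ - q xⱼxᵢ, i<j)`,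
represented by its coefficient function with respect to the ordered monomial basis
`x^α = x₁^{α₁}⋯xₙ^{αₙ}`. -/
abbrev QPoly (n : ℕ) := QIdx n → ℂ

/-- The symmetric q-number `[m]_q = (q^m - q^{-m})/(q - q⁻¹)` (as a complex scalar). -/
def qNum (q : ℝ) (m : ℤ) : ℂ := ((q : ℂ) ^ m - (q : ℂ) ^ (-m)) / ((q : ℂ) - (q : ℂ)⁻¹)

/-- `∑_{j<i} αⱼ`. -/
def lowSum {n : ℕ} (i : Fin n) (α : QIdx n) : ℤ := ∑ j, if j < i then (α j : ℤ) else 0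

/-- `∑_{j>i} αⱼ`. -/
def highSum {n : ℕ} (i : Fin n) (α : QIdx n) : ℤ := ∑ j, if i < j then (α j : ℤ) else 0

/-- `∑_j αⱼ`, the total degree. -/
def totSum {n : ℕ} (α : QIdx n) : ℤ := ∑ j, (α j : ℤ)

/-- The dilation operator `γᵢ : xᵢ ↦ q·xᵢ`; on monomials `γᵢ x^α = q^{αᵢ} x^α`. -/
def gam {n : ℕ} (q : ℝ) (i : Fin n) (f : QPoly n) : QPoly n :=
  fun α => (q : ℂ) ^ (α i : ℤ) * f α

/-- The inverse dilation `γᵢ⁻¹`. -/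
def gamInv {n : ℕ} (q : ℝ) (i : Fin n) (f : QPoly n) : QPoly n :=
  fun α => (q : ℂ) ^ (-(α i : ℤ)) * f α

/-- The total dilation `γ = γ₁⋯γₙ`. -/
def gamAll {n : ℕ} (q : ℝ) (f : QPoly n) : QPoly n :=
  fun α => (q : ℂ) ^ totSum α * f α

/-- The inverse total dilation `γ⁻¹`. -/
def gamAllInv {n : ℕ} (q : ℝ) (f : QPoly n) : QPoly n :=
  fun α => (q : ℂ) ^ (-totSum α) * f α

/-- `ωᵢ = γ₁⁻¹⋯γ_{i-1}⁻¹ γ_{i+1}⋯γₙ`; on monomials it multiplies by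
`q^{∑_{j>i} αⱼ - ∑_{j<i} αⱼ}`. -/
def omegaOp {n : ℕ} (q : ℝ) (i : Fin n) (f : QPoly n) : QPoly n :=
  fun α => (q : ℂ) ^ (highSum i α - lowSum i α) * f α

/-- `ωᵢ⁻¹ = γ₁⋯γ_{i-1} γ_{i+1}⁻¹⋯γₙ⁻¹`. -/
def omegaInvOp {n : ℕ} (q : ℝ) (i : Fin n) (f : QPoly n) : QPoly n :=
  fun α => (q : ℂ) ^ (lowSum i α - highSum i α) * f α

/-- Left multiplication by `xᵢ`:  `xᵢ · x^β = q^{-∑_{j<i} βⱼ} x^{β+δᵢ}` in `A`. -/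
def xL {n : ℕ} (q : ℝ) (i : Fin n) (f : QPoly n) : QPoly n :=
  fun α => if α i = 0 then 0 else
    (q : ℂ) ^ (-(lowSum i α)) * f (α - Finsupp.single i 1)

/-- Right multiplication by `xᵢ`:  `x^β · xᵢ = q^{-∑_{j>i} βⱼ} x^{β+δᵢ}` in `A`. -/
def xR {n : ℕ} (q : ℝ) (i : Fin n) (f : QPoly n) : QPoly n :=
  fun α => if α i = 0 then 0 else
    (q : ℂ) ^ (-(highSum i α)) * f (α - Finsupp.single i 1)

/-- The left partial q-difference operator `∂ᵢᴸ = (xᵢᴸ)⁻¹(γᵢ - γᵢ⁻¹)/(q - q⁻¹)`;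
on monomials `∂ᵢᴸ x^α = [αᵢ]_q q^{∑_{j<i} αⱼ} x^{α-δᵢ}`. -/
def dL {n : ℕ} (q : ℝ) (i : Fin n) (f : QPoly n) : QPoly n :=
  fun α => qNum q (α i + 1) * (q : ℂ) ^ lowSum i α * f (α + Finsupp.single i 1)

/-- The right partial q-difference operator `∂ᵢᴿ = (xᵢᴿ)⁻¹(γᵢ - γᵢ⁻¹)/(q - q⁻¹)`;
on monomials `∂ᵢᴿ x^α = [αᵢ]_q q^{∑_{j>i} αⱼ} x^{α-δᵢ}`. -/
def dR {n : ℕ} (q : ℝ) (i : Fin n) (f : QPoly n) : QPoly n :=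
  fun α => qNum q (α i + 1) * (q : ℂ) ^ highSum i α * f (α + Finsupp.single i 1)

/-- The q-power picked up when reordering `x^α · x^β = q^(qExp α β) x^{α+β}`,
namely `qExp α β = -∑_{i>j} αᵢ βⱼ`. -/
def qExp {n : ℕ} (α β : QIdx n) : ℤ :=
  -∑ i, ∑ j, if j < i then (α i : ℤ) * (β j : ℤ) else 0

/-- Multiplication in the q-commutative algebra `A`, in coefficient form. -/
def qMul {n : ℕ} (q : ℝ) (f g : QPoly n) : QPoly n :=
  fun α => ∑ p ∈ Finset.HasAntidiagonal.antidiagonal α, (q : ℂ) ^ qExp p.1 p.2 * f p.1 * g p.2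

/-- The unit of `A`. -/
def qOne {n : ℕ} : QPoly n := fun α => if α = 0 then 1 else 0

/-- Powers in `A`. -/
def qPow {n : ℕ} (q : ℝ) (f : QPoly n) : ℕ → QPoly n
  | 0 => qOne
  | m + 1 => qMul q f (qPow q f m)

/-- The monomial `x^α` as an element of `A`. -/
def mono {n : ℕ} (α : QIdx n) : QPoly n := fun β => if β = α then 1 else 0

/-- The variable `xᵢ` as an element of `A`. -/
def Xvar {n : ℕ} (i : Fin n) : QPoly n := mono (Finsupp.single i 1)

/-- The Q-radius `Q = x₁² + q⁻¹ x₂² + … + q^{-n+1} xₙ²` as an element of `A`. -/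
def Qradius {n : ℕ} (q : ℝ) : QPoly n :=
  ∑ i : Fin n, (q : ℂ) ^ (-((i : ℕ) : ℤ)) • qMul q (Xvar i) (Xvar i)

/-- The operator `Q̂ᴸ = ∑ᵢ q^{-i+1}(xᵢᴸ)²` of left multiplication by the Q-radius. -/
def QhatL {n : ℕ} (q : ℝ) (f : QPoly n) : QPoly n :=
  ∑ i : Fin n, (q : ℂ) ^ (-((i : ℕ) : ℤ)) • xL q i (xL q i f)

/-- The `U_q(o)`-invariant q-Laplacian `Δ_qᴿ = ∑ᵢ q^{n-i}(∂ᵢᴿ)²`. -/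
def qLap {n : ℕ} (q : ℝ) (f : QPoly n) : QPoly n :=
  ∑ i : Fin n, (q : ℂ) ^ ((n : ℤ) - 1 - ((i : ℕ) : ℤ)) • dR q i (dR q i f)


/-- `√q` as a complex scalar. -/
def sqC (q : ℝ) : ℂ := Complex.ofReal (Real.sqrt q)

/-!
On monomials, `xᵢᴸ` and `∂ⱼᴸ` only shift the exponent of one variable and multiply by a power of `q`
recording how many variables the new factor has to pass. For `i < j` the powers picked up by
`xᵢᴸ ∂ⱼᴸ` and `∂ⱼᴸ xᵢᴸ` differ by exactly one factor `q`, since `xᵢ` lies to the left of `xⱼ`.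
For `i = j` the two composites are diagonal, `xᵢᴸ ∂ᵢᴸ = [Nᵢ]_q` and `∂ᵢᴸ xᵢᴸ = [Nᵢ + 1]_q` with
`Nᵢ x^α = αᵢ x^α`, and the second relation is the identity `[m]_q - q⁻¹ [m + 1]_q = -q^{-m-1}`.
-/

lemma ofReal_sub_inv_ne_zero_of_pos_of_ne_one {q : ℝ} (hq : 0 < q) (hq1 : q ≠ 1) :
    (q : ℂ) - (q : ℂ)⁻¹ ≠ 0 := by
  rw [← Complex.ofReal_inv, ← Complex.ofReal_sub, Complex.ofReal_ne_zero, sub_ne_zero]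
  intro h
  have hsq : q * q = 1 := by nth_rw 2 [h]; exact mul_inv_cancel₀ hq.ne'
  rcases mul_self_eq_one_iff.mp hsq with h1 | h1
  · exact hq1 h1
  · linarith

lemma qNum_zero (q : ℝ) : qNum q 0 = 0 := by
  simp [qNum]

lemma qNum_sub_inv_mul_qNum_add_one {q : ℝ} (hq : (q : ℂ) - (q : ℂ)⁻¹ ≠ 0) (m : ℤ) :
    qNum q m - (q : ℂ)⁻¹ * qNum q (m + 1) = -((q : ℂ)⁻¹ * (q : ℂ) ^ (-m)) := by
  have hq0 : (q : ℂ) ≠ 0 := by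
    rintro h
    simp [h] at hq
  unfold qNum
  rw [mul_div_assoc', div_sub_div_same, div_eq_iff hq, zpow_add_one₀ hq0, neg_add, zpow_add₀ hq0,
    zpow_neg_one]
  field_simp
  ring

section Weyl

variable {n : ℕ}

lemma exists_eq_add_single_of_ne_zero {α : QIdx n} {i : Fin n} (h : α i ≠ 0) :
    ∃ β : QIdx n, α = β + Finsupp.single i 1 :=
  ⟨α - Finsupp.single i 1,
    (tsub_add_cancel_of_le (Finsupp.single_le_iff.mpr (Nat.one_le_iff_ne_zero.mpr h))).symm⟩

lemma lowSum_add (i : Fin n) (α β : QIdx n) : lowSum i (α + β) = lowSum i α + lowSum i β := by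
  simp only [lowSum, ← Finset.sum_add_distrib, Finsupp.add_apply, Nat.cast_add]
  refine Finset.sum_congr rfl fun k _ => ?_
  split_ifs <;> simp

lemma lowSum_single_one (i j : Fin n) : lowSum i (Finsupp.single j 1) = if j < i then 1 else 0 := by
  simp only [lowSum, Finsupp.single_apply]
  rw [Finset.sum_eq_single j]
  · simp
  · intro k _ hk
    simp [Ne.symm hk]
  · simp

lemma lowSum_add_single_of_le {i j : Fin n} (hij : i ≤ j) (α : QIdx n) :
    lowSum i (α + Finsupp.single j 1) = lowSum i α := by
  simp [lowSum_add, lowSum_single_one, not_lt.mpr hij]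

lemma lowSum_add_single_of_lt {i j : Fin n} (hij : i < j) (α : QIdx n) :
    lowSum j (α + Finsupp.single i 1) = lowSum j α + 1 := by
  simp [lowSum_add, lowSum_single_one, hij]

lemma xL_apply_of_eq_zero (q : ℝ) (i : Fin n) (f : QPoly n) {α : QIdx n} (h : α i = 0) :
    xL q i f α = 0 := by
  simp [xL, h]

lemma xL_apply_add_single (q : ℝ) (i : Fin n) (f : QPoly n) (β : QIdx n) :
    xL q i f (β + Finsupp.single i 1) = (q : ℂ) ^ (-lowSum i β) * f β := by
  simp [xL, lowSum_add_single_of_le le_rfl]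

lemma xL_dL_self {q : ℝ} (hq : (q : ℂ) ≠ 0) (i : Fin n) (f : QPoly n) :
    xL q i (dL q i f) = fun α => qNum q (α i) * f α := by
  funext α
  by_cases h : α i = 0
  · rw [xL_apply_of_eq_zero q i _ h, h, Nat.cast_zero, qNum_zero, zero_mul]
  obtain ⟨β, rfl⟩ := exists_eq_add_single_of_ne_zero h
  simp only [xL_apply_add_single, dL, Finsupp.add_apply, Finsupp.single_eq_same, Nat.cast_add,
    Nat.cast_one]
  linear_combination qNum q (β i + 1) * f (β + Finsupp.single i 1) * zpow_neg_mul_zpow_self _ hq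

lemma dL_xL_self {q : ℝ} (hq : (q : ℂ) ≠ 0) (i : Fin n) (f : QPoly n) :
    dL q i (xL q i f) = fun α => qNum q (α i + 1) * f α := by
  funext α
  rw [dL, xL_apply_add_single, ← mul_assoc, mul_assoc (qNum _ _), ← zpow_add₀ hq,
    add_neg_cancel, zpow_zero, mul_one]

lemma xL_dL_of_lt {q : ℝ} (hq : (q : ℂ) ≠ 0) {i j : Fin n} (hij : i < j) (f : QPoly n) :
    xL q i (dL q j f) = (q : ℂ)⁻¹ • dL q j (xL q i f) := by
  funext α
  simp only [Pi.smul_apply, smul_eq_mul]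
  by_cases h : α i = 0
  · have h' : (α + Finsupp.single j 1 : QIdx n) i = 0 := by simp [h, hij.ne]
    simp [xL_apply_of_eq_zero q i _ h, dL, xL_apply_of_eq_zero q i _ h']
  obtain ⟨β, rfl⟩ := exists_eq_add_single_of_ne_zero h
  rw [xL_apply_add_single, dL, dL, add_right_comm, xL_apply_add_single,
    lowSum_add_single_of_le hij.le, lowSum_add_single_of_lt hij, zpow_add_one₀ hq]
  simp only [Finsupp.add_apply, Finsupp.single_eq_of_ne' hij.ne, add_zero]
  field_simp

end Weyl

/-- Left Weyl relations:
`xᵢᴸ ∂ⱼᴸ - q⁻¹ ∂ⱼᴸ xᵢᴸ = 0` for `i < j` and `xᵢᴸ ∂ᵢᴸ - q⁻¹ ∂ᵢᴸ xᵢᴸ = -q⁻¹ γᵢ⁻¹`. -/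
theorem left_weyl_relations (n : ℕ) (q : ℝ) (hq : 0 < q) (hq1 : q ≠ 1)
    (i j : Fin n) (hij : i < j) :
    (∀ f : QPoly n, xL q i (dL q j f) - (q : ℂ)⁻¹ • dL q j (xL q i f) = 0) ∧
    (∀ f : QPoly n, xL q i (dL q i f) - (q : ℂ)⁻¹ • dL q i (xL q i f)
        = -((q : ℂ)⁻¹ • gamInv q i f)) := by
  have hq0 : (q : ℂ) ≠ 0 := Complex.ofReal_ne_zero.mpr hq.ne'
  refine ⟨fun f => sub_eq_zero.mpr (xL_dL_of_lt hq0 hij f), fun f => ?_⟩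
  funext α
  have key := qNum_sub_inv_mul_qNum_add_one (ofReal_sub_inv_ne_zero_of_pos_of_ne_one hq hq1) (α i)
  simp only [xL_dL_self hq0, dL_xL_self hq0, gamInv, Pi.sub_apply, Pi.smul_apply, Pi.neg_apply,
    smul_eq_mul]
  linear_combination f α * key
end
end

section
/- In the case n = 2, the polynomials z_q^m = (x₁+ix₂)(x₁+iqx₂)⋯(x₁+iq^{m−1}x₂) and z̄_q^m = (x₁−ix₂)(x₁−iqx₂)⋯(x₁−iq^{m−1}x₂) are q-harmonic: Δ_qᴿ z_q^m = 0 and Δ_qᴿ z̄_q^m = 0, where Δ_qᴿ = q(∂₁ᴿ)² + (∂₂ᴿ)². -/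
noncomputable section

/-- `z_r = x₁ + i q^r x₂` in the q-plane (`n = 2`). -/
def zvar (q : ℝ) (r : ℕ) : QPoly 2 :=
  Xvar 0 + (Complex.I * (q : ℂ) ^ (r : ℤ)) • Xvar 1

/-- `z̄_r = x₁ − i q^r x₂`. -/
def zbar (q : ℝ) (r : ℕ) : QPoly 2 :=
  Xvar 0 - (Complex.I * (q : ℂ) ^ (r : ℤ)) • Xvar 1

/-- `z_s z_{s+1} ⋯ z_{s+m-1}`. -/
def zProd (q : ℝ) : ℕ → ℕ → QPoly 2
  | _, 0 => qOne
  | s, m + 1 => qMul q (zvar q s) (zProd q (s + 1) m)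

/-- `z̄_s z̄_{s+1} ⋯ z̄_{s+m-1}`. -/
def zbProd (q : ℝ) : ℕ → ℕ → QPoly 2
  | _, 0 => qOne
  | s, m + 1 => qMul q (zbar q s) (zbProd q (s + 1) m)

/-! Expanding `(x₁ + ζx₂)(x₁ + ζqx₂)⋯(x₁ + ζq^{m-1}x₂)` with the rule `x₂x₁ = q⁻¹x₁x₂` gives a
q-binomial theorem: the coefficient of `x₁^a x₂^b` is `ζ^b q^{b(b-1)/2} [a+b choose a]_q`, by
induction on `m` through the q-Pascal rule. The q-Laplacian pairs the coefficients at `(a+2, b)`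
and `(a, b+2)`, and these cancel because `ζ² = -1` and
`[a+1][a+2] [a+b+2 choose a+2]_q = [b+1][b+2] [a+b+2 choose a]_q`. -/

section QNumber

variable {q : ℝ}

theorem qNum_add (hq : q ≠ 0) (x y : ℤ) :
    qNum q (x + y) = (q : ℂ) ^ y * qNum q x + (q : ℂ) ^ (-x) * qNum q y := by
  have hq : (q : ℂ) ≠ 0 := Complex.ofReal_ne_zero.mpr hq
  simp only [qNum, neg_add, zpow_add₀ hq]
  ring

theorem qNum_ne_zero (hq : 0 < q) (hq1 : q ≠ 1) {k : ℤ} (hk : k ≠ 0) : qNum q k ≠ 0 := by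
  have hpow : q ^ k ≠ q ^ (-k) := fun h => hk (by linarith [zpow_right_injective₀ hq hq1 h])
  have hinv : q ≠ q⁻¹ := by
    simpa using zpow_right_injective₀ hq hq1 |>.ne (by norm_num : (1 : ℤ) ≠ -1)
  unfold qNum
  refine div_ne_zero (sub_ne_zero.mpr ?_) (sub_ne_zero.mpr ?_) <;> exact_mod_cast ‹_›

def qFactorial (q : ℝ) : ℕ → ℂ
  | 0 => 1
  | k + 1 => qNum q (k + 1) * qFactorial q k

theorem qFactorial_succ (k : ℕ) : qFactorial q (k + 1) = qNum q (k + 1) * qFactorial q k := rfl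

theorem qFactorial_ne_zero (hq : 0 < q) (hq1 : q ≠ 1) (k : ℕ) : qFactorial q k ≠ 0 := by
  induction k with
  | zero => exact one_ne_zero
  | succ k ih => exact mul_ne_zero (qNum_ne_zero hq hq1 (by omega)) ih

/-- The symmetric q-binomial coefficient `[a+b choose a]_q`. -/
def qChoose (q : ℝ) (a b : ℕ) : ℂ := qFactorial q (a + b) / (qFactorial q a * qFactorial q b)

theorem qChoose_comm (a b : ℕ) : qChoose q a b = qChoose q b a := by
  rw [qChoose, qChoose, add_comm, mul_comm]

theorem qChoose_zero_right (hq : 0 < q) (hq1 : q ≠ 1) (a : ℕ) : qChoose q a 0 = 1 := by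
  simp only [qChoose, qFactorial, add_zero, mul_one]
  exact div_self (qFactorial_ne_zero hq hq1 a)

theorem qChoose_zero_left (hq : 0 < q) (hq1 : q ≠ 1) (b : ℕ) : qChoose q 0 b = 1 := by
  rw [qChoose_comm, qChoose_zero_right hq hq1]

theorem qChoose_succ_succ (hq : 0 < q) (hq1 : q ≠ 1) (a b : ℕ) :
    qChoose q (a + 1) (b + 1) =
      (q : ℂ) ^ (b + 1 : ℤ) * qChoose q a (b + 1) +
        (q : ℂ) ^ (-(a + 1 : ℤ)) * qChoose q (a + 1) b := by
  have hF := qFactorial_ne_zero hq hq1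
  have hA := qNum_ne_zero hq hq1 (k := (a : ℤ) + 1) (by omega)
  have hB := qNum_ne_zero hq hq1 (k := (b : ℤ) + 1) (by omega)
  simp only [qChoose, show a + 1 + (b + 1) = (a + (b + 1)) + 1 by omega, qFactorial_succ,
    show a + 1 + b = a + (b + 1) by omega]
  push_cast
  rw [show (a : ℤ) + (b + 1) + 1 = (a + 1) + (b + 1) by ring, qNum_add hq.ne']
  field_simp

theorem qNum_mul_qNum_mul_qChoose_eq_div (hq : 0 < q) (hq1 : q ≠ 1) (a b : ℕ) :
    qNum q (a + 1) * qNum q (a + 2) * qChoose q (a + 2) b =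
      qFactorial q (a + b + 2) / (qFactorial q a * qFactorial q b) := by
  have hF := qFactorial_ne_zero hq hq1
  have hA1 := qNum_ne_zero hq hq1 (k := (a : ℤ) + 1) (by omega)
  have hA2 := qNum_ne_zero hq hq1 (k := (a : ℤ) + 2) (by omega)
  simp only [qChoose, show a + 2 + b = a + b + 2 by omega, show a + 2 = a + 1 + 1 from rfl,
    qFactorial_succ]
  push_cast
  rw [show (a : ℤ) + 1 + 1 = a + 2 by ring]
  field_simp

theorem qNum_mul_qNum_mul_qChoose_symm (hq : 0 < q) (hq1 : q ≠ 1) (a b : ℕ) :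
    qNum q (a + 1) * qNum q (a + 2) * qChoose q (a + 2) b =
      qNum q (b + 1) * qNum q (b + 2) * qChoose q a (b + 2) := by
  rw [qChoose_comm a, qNum_mul_qNum_mul_qChoose_eq_div hq hq1,
    qNum_mul_qNum_mul_qChoose_eq_div hq hq1, add_comm a b, mul_comm (qFactorial q a)]

end QNumber

theorem qMul_add_smul_left {n : ℕ} (q : ℝ) (f g h : QPoly n) (c : ℂ) :
    qMul q (f + c • g) h = qMul q f h + c • qMul q g h := by
  funext α
  simp only [qMul, Pi.add_apply, Pi.smul_apply, smul_eq_mul, Finset.mul_sum,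
    ← Finset.sum_add_distrib]
  exact Finset.sum_congr rfl fun _ _ => by ring

theorem qMul_mono_apply {n : ℕ} (q : ℝ) (β : QIdx n) (g : QPoly n) (α : QIdx n) :
    qMul q (mono β) g α = if β ≤ α then (q : ℂ) ^ qExp β (α - β) * g (α - β) else 0 := by
  have hsum : qMul q (mono β) g α =
      ∑ p ∈ (Finset.HasAntidiagonal.antidiagonal α).filter (·.1 = β),
        (q : ℂ) ^ qExp p.1 p.2 * g p.2 := by
    rw [Finset.sum_filter]
    exact Finset.sum_congr rfl fun p _ => by by_cases h : p.1 = β <;> simp [mono, h]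
  rw [hsum]
  convert congrArg (∑ p ∈ ·, (q : ℂ) ^ qExp p.1 p.2 * g p.2)
    (Finset.HasAntidiagonal.filter_fst_eq_antidiagonal α β) using 1
  split_ifs <;> simp

theorem qMul_Xvar_zero_apply (q : ℝ) (g : QPoly 2) (α : QIdx 2) :
    qMul q (Xvar 0) g α = if α 0 = 0 then 0 else g (α - Finsupp.single 0 1) := by
  simp only [Xvar, qMul_mono_apply, Finsupp.single_le_iff]
  by_cases h : α 0 = 0 <;> simp [h, qExp, Fin.sum_univ_two, Nat.one_le_iff_ne_zero]

theorem qMul_Xvar_one_apply (q : ℝ) (g : QPoly 2) (α : QIdx 2) :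
    qMul q (Xvar 1) g α =
      if α 1 = 0 then 0 else (q : ℂ) ^ (-(α 0 : ℤ)) * g (α - Finsupp.single 1 1) := by
  simp only [Xvar, qMul_mono_apply, Finsupp.single_le_iff]
  by_cases h : α 1 = 0 <;> simp [h, qExp, Fin.sum_univ_two, Nat.one_le_iff_ne_zero]

theorem dR_zero_apply (q : ℝ) (f : QPoly 2) (α : QIdx 2) :
    dR q 0 f α = qNum q (α 0 + 1) * (q : ℂ) ^ α 1 * f (α + Finsupp.single 0 1) := by
  simp [dR, highSum, Fin.sum_univ_two]

theorem dR_one_apply (q : ℝ) (f : QPoly 2) (α : QIdx 2) :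
    dR q 1 f α = qNum q (α 1 + 1) * f (α + Finsupp.single 1 1) := by
  simp [dR, highSum, Fin.sum_univ_two]

section QBinomial

variable {q : ℝ}

/-- The coefficient of `x₁^a x₂^b` in `∏_{r < a+b} (x₁ + ζ q^r x₂)` (q-binomial theorem). -/
def qBinomCoeff (q : ℝ) (ζ : ℂ) (a b : ℕ) : ℂ := ζ ^ b * (q : ℂ) ^ b.choose 2 * qChoose q a b

def qBinomPoly (q : ℝ) (ζ : ℂ) (m : ℕ) : QPoly 2 :=
  fun α => if α 0 + α 1 = m then qBinomCoeff q ζ (α 0) (α 1) else 0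

theorem qBinomCoeff_succ_zero (hq : 0 < q) (hq1 : q ≠ 1) (ζ : ℂ) (a : ℕ) :
    qBinomCoeff q ζ (a + 1) 0 = qBinomCoeff q (ζ * q) a 0 := by
  simp [qBinomCoeff, qChoose_zero_right hq hq1]

theorem qBinomCoeff_zero_succ (hq : 0 < q) (hq1 : q ≠ 1) (ζ : ℂ) (b : ℕ) :
    qBinomCoeff q ζ 0 (b + 1) = ζ * qBinomCoeff q (ζ * q) 0 b := by
  simp only [qBinomCoeff, qChoose_zero_left hq hq1, Nat.choose_succ_succ', Nat.choose_one_right]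
  ring

theorem qBinomCoeff_succ_succ (hq : 0 < q) (hq1 : q ≠ 1) (ζ : ℂ) (a b : ℕ) :
    qBinomCoeff q ζ (a + 1) (b + 1) =
      qBinomCoeff q (ζ * q) a (b + 1) +
        ζ * (q : ℂ) ^ (-(a + 1 : ℤ)) * qBinomCoeff q (ζ * q) (a + 1) b := by
  have hq0 : (q : ℂ) ≠ 0 := Complex.ofReal_ne_zero.mpr hq.ne'
  have hpow : (q : ℂ) ^ (-(a + 1 : ℤ)) = ((q : ℂ) ^ (a + 1))⁻¹ := by rw [zpow_neg]; norm_cast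
  have hpow' : (q : ℂ) ^ (b + 1 : ℤ) = (q : ℂ) ^ (b + 1) := by norm_cast
  simp only [qBinomCoeff, qChoose_succ_succ hq hq1, hpow, hpow', Nat.choose_succ_succ' b 1,
    Nat.choose_one_right]
  field_simp
  ring

theorem qBinomCoeff_harmonic (hq : 0 < q) (hq1 : q ≠ 1) {ζ : ℂ} (hζ : ζ ^ 2 = -1) (a b : ℕ) :
    q * (qNum q (a + 1) * (q : ℂ) ^ b *
        (qNum q (a + 2) * (q : ℂ) ^ b * qBinomCoeff q ζ (a + 2) b)) +
      qNum q (b + 1) * (qNum q (b + 2) * qBinomCoeff q ζ a (b + 2)) = 0 := by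
  have hchoose : (b + 2).choose 2 = b.choose 2 + b + (b + 1) := by
    rw [Nat.choose_succ_succ' (b + 1) 1, Nat.choose_succ_succ' b 1, Nat.choose_one_right,
      Nat.choose_one_right]
    ring
  simp only [qBinomCoeff, hchoose, pow_add, hζ]
  linear_combination (ζ ^ b * (q : ℂ) ^ b.choose 2 * (q : ℂ) ^ b * (q : ℂ) ^ b * q) *
    qNum_mul_qNum_mul_qChoose_symm hq hq1 a b

theorem qBinomPoly_zero (hq : 0 < q) (hq1 : q ≠ 1) (ζ : ℂ) : qBinomPoly q ζ 0 = qOne := by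
  funext α
  by_cases hα : α = 0
  · simp [hα, qBinomPoly, qOne, qBinomCoeff, qChoose_zero_left hq hq1]
  · have : α 0 + α 1 ≠ 0 := fun h => hα (Finsupp.ext fun i => by fin_cases i <;> simp <;> omega)
    simp only [qBinomPoly, qOne, if_neg hα, if_neg this]

theorem qMul_linear_qBinomPoly (hq : 0 < q) (hq1 : q ≠ 1) (ζ : ℂ) (m : ℕ) :
    qMul q (Xvar 0 + ζ • Xvar 1) (qBinomPoly q (ζ * q) m) = qBinomPoly q ζ (m + 1) := by
  funext α
  simp only [qMul_add_smul_left, Pi.add_apply, Pi.smul_apply, smul_eq_mul, qMul_Xvar_zero_apply,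
    qMul_Xvar_one_apply, qBinomPoly, Finsupp.coe_tsub, Pi.sub_apply, Finsupp.single_apply,
    Fin.isValue, Fin.one_eq_zero_iff, OfNat.ofNat_ne_one, if_false, if_true, tsub_zero,
    zero_ne_one]
  generalize α 0 = a, α 1 = b
  rcases a with _ | a <;> rcases b with _ | b
  · simp
  · by_cases hm : b = m
    · simp [hm, qBinomCoeff_zero_succ hq hq1]
    · simp [hm]
  · by_cases hm : a = m
    · simp [hm, qBinomCoeff_succ_zero hq hq1]
    · simp [hm]
  · by_cases hm : a + (b + 1) = m
    · simp [hm, show a + 1 + b = m by omega, show a + 1 + (b + 1) = m + 1 by omega,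
        qBinomCoeff_succ_succ hq hq1]
      ring
    · simp [hm, show a + 1 + b ≠ m by omega, show a + 1 + (b + 1) ≠ m + 1 by omega]

theorem qBinomPoly_harmonic (hq : 0 < q) (hq1 : q ≠ 1) {ζ : ℂ} (hζ : ζ ^ 2 = -1) (m : ℕ) :
    (q : ℂ) • dR q 0 (dR q 0 (qBinomPoly q ζ m)) + dR q 1 (dR q 1 (qBinomPoly q ζ m)) = 0 := by
  funext α
  simp only [Pi.add_apply, Pi.smul_apply, smul_eq_mul, Pi.zero_apply, dR_zero_apply, dR_one_apply,
    qBinomPoly, Finsupp.coe_add, Finsupp.single_apply, Fin.isValue, if_true, zero_ne_one,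
    one_ne_zero, if_false, add_zero, Nat.cast_add, Nat.cast_one]
  by_cases hm : α 0 + α 1 + 2 = m
  · rw [if_pos (by omega), if_pos (by omega)]
    simpa only [add_assoc, one_add_one_eq_two] using qBinomCoeff_harmonic hq hq1 hζ (α 0) (α 1)
  · rw [if_neg (by omega), if_neg (by omega)]
    ring

theorem eq_qBinomPoly_of_rec (hq : 0 < q) (hq1 : q ≠ 1) (c : ℂ) (F : ℕ → ℕ → QPoly 2)
    (hzero : ∀ s, F s 0 = qOne)
    (hsucc : ∀ s m,
      F s (m + 1) = qMul q (Xvar 0 + (c * (q : ℂ) ^ (s : ℤ)) • Xvar 1) (F (s + 1) m))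
    (m s : ℕ) : F s m = qBinomPoly q (c * (q : ℂ) ^ (s : ℤ)) m := by
  induction m generalizing s with
  | zero => rw [hzero, qBinomPoly_zero hq hq1]
  | succ m ih =>
    have hshift : c * (q : ℂ) ^ ((s + 1 : ℕ) : ℤ) = c * (q : ℂ) ^ (s : ℤ) * q := by
      rw [Nat.cast_succ, zpow_add_one₀ (Complex.ofReal_ne_zero.mpr hq.ne'), mul_assoc]
    rw [hsucc, ih, hshift, qMul_linear_qBinomPoly hq hq1]

end QBinomial

/-- for `n = 2` the polynomials `z_q^m` and `z̄_q^m` are q-harmonic: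
`Δ_qᴿ z_q^m = 0 = Δ_qᴿ z̄_q^m`, with `Δ_qᴿ = q(∂₁ᴿ)² + (∂₂ᴿ)²`. -/
theorem zq_powers_are_q_harmonic (q : ℝ) (hq : 0 < q) (hq1 : q ≠ 1) (m : ℕ) :
    (q : ℂ) • dR q 0 (dR q 0 (zProd q 0 m)) + dR q 1 (dR q 1 (zProd q 0 m)) = 0 ∧
    (q : ℂ) • dR q 0 (dR q 0 (zbProd q 0 m)) + dR q 1 (dR q 1 (zbProd q 0 m)) = 0 := by
  have hz : zProd q 0 m = qBinomPoly q Complex.I m := by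
    simpa using eq_qBinomPoly_of_rec hq hq1 Complex.I (zProd q) (fun _ => rfl)
      (fun _ _ => rfl) m 0
  have hzb : zbProd q 0 m = qBinomPoly q (-Complex.I) m := by
    simpa using eq_qBinomPoly_of_rec hq hq1 (-Complex.I) (zbProd q) (fun _ => rfl)
      (fun s m => by rw [zbProd, zbar, sub_eq_add_neg, ← neg_smul, neg_mul]) m 0
  rw [hz, hzb]
  exact ⟨qBinomPoly_harmonic hq hq1 Complex.I_sq m,
    qBinomPoly_harmonic hq hq1 (by rw [neg_sq, Complex.I_sq]) m⟩
end
end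

section
/- In the q-Clifford algebra Cl_{0,n}^q with generators satisfying eⱼ² = −1 and eᵢeⱼ = −q eⱼeᵢ for i < j, the q-Dirac operator 𝔇_qᴿ = Σᵢ √q^{n−i} eᵢ ∂ᵢᴿ satisfies 𝔇_qᴿ 𝔇_qᴿ = −Δ_qᴿ, where Δ_qᴿ = Σᵢ q^{n−i}(∂ᵢᴿ)². -/
noncomputable section

/-- The right partial q-difference operator on Clifford-algebra-valued polynomials. -/
def dRC {n : ℕ} {C : Type*} [Ring C] [Algebra ℂ C] (q : ℝ) (i : Fin n)
    (f : QIdx n → C) : QIdx n → C :=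
  fun α => (qNum q (α i + 1) * (q : ℂ) ^ highSum i α) • f (α + Finsupp.single i 1)

/-- The left partial q-difference operator on Clifford-algebra-valued polynomials. -/
def dLC {n : ℕ} {C : Type*} [Ring C] [Algebra ℂ C] (q : ℝ) (i : Fin n)
    (f : QIdx n → C) : QIdx n → C :=
  fun α => (qNum q (α i + 1) * (q : ℂ) ^ lowSum i α) • f (α + Finsupp.single i 1)

/-- Left multiplication by `xᵢ` on Clifford-algebra-valued polynomials. -/
def xLC {n : ℕ} {C : Type*} [Ring C] [Algebra ℂ C] (q : ℝ) (i : Fin n)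
    (f : QIdx n → C) : QIdx n → C :=
  fun α => if α i = 0 then 0 else
    (q : ℂ) ^ (-(lowSum i α)) • f (α - Finsupp.single i 1)

/-- The dilation `γᵢ` on Clifford-algebra-valued polynomials. -/
def gamC {n : ℕ} {C : Type*} [Ring C] [Algebra ℂ C] (q : ℝ) (i : Fin n)
    (f : QIdx n → C) : QIdx n → C :=
  fun α => (q : ℂ) ^ (α i : ℤ) • f α

/-- The inverse dilation `γᵢ⁻¹` on Clifford-algebra-valued polynomials. -/
def gamInvC {n : ℕ} {C : Type*} [Ring C] [Algebra ℂ C] (q : ℝ) (i : Fin n)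
    (f : QIdx n → C) : QIdx n → C :=
  fun α => (q : ℂ) ^ (-(α i : ℤ)) • f α

/-- q-commutative multiplication of Clifford-algebra-valued polynomials (the
variables q-commute among themselves and commute with the Clifford generators). -/
def qMulC {n : ℕ} {C : Type*} [Ring C] [Algebra ℂ C] (q : ℝ)
    (f g : QIdx n → C) : QIdx n → C :=
  fun α => ∑ p ∈ Finset.HasAntidiagonal.antidiagonal α, (q : ℂ) ^ qExp p.1 p.2 • (f p.1 * g p.2)

/-- The variable `xᵢ` as a Clifford-algebra-valued polynomial. -/
def XvarC {n : ℕ} (C : Type*) [Ring C] [Algebra ℂ C] (i : Fin n) : QIdx n → C :=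
  fun α => if α = Finsupp.single i 1 then 1 else 0

/-- The q-Dirac operator `𝔇_qᴿ = ∑ᵢ √q^{n-i} eᵢ ∂ᵢᴿ`. -/
def DiracR {n : ℕ} {C : Type*} [Ring C] [Algebra ℂ C] (q : ℝ) (e : Fin n → C)
    (f : QIdx n → C) : QIdx n → C :=
  fun α => ∑ i : Fin n, (sqC q) ^ ((n : ℤ) - 1 - ((i : ℕ) : ℤ)) • (e i * dRC q i f α)

/-- The q-Laplacian `Δ_qᴿ = ∑ᵢ q^{n-i} (∂ᵢᴿ)²` on Clifford-algebra-valued polynomials. -/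
def qLapC {n : ℕ} {C : Type*} [Ring C] [Algebra ℂ C] (q : ℝ)
    (f : QIdx n → C) : QIdx n → C :=
  fun α => ∑ i : Fin n, (q : ℂ) ^ ((n : ℤ) - 1 - ((i : ℕ) : ℤ)) • dRC q i (dRC q i f) α

/-!
Expanding `𝔇_qᴿ 𝔇_qᴿ` gives the double sum `∑ᵢ ∑ⱼ √q^{2n-i-j} eᵢeⱼ ∂ᵢᴿ∂ⱼᴿ`. For `i < j` the Clifford
relation `eᵢeⱼ = -q eⱼeᵢ` and the q-commutation `∂ⱼᴿ∂ᵢᴿ = q ∂ᵢᴿ∂ⱼᴿ` make the terms `(i, j)` and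
`(j, i)` cancel, so only the diagonal survives, where `eᵢ² = -1` and `√q^{2(n-i)} = q^{n-i}`.
-/

theorem Finset.sum_sum_eq_sum_diag_of_add_swap_eq_zero {ι M : Type*} [AddCommMonoid M]
    (s : Finset ι) (T : ι → ι → M) (h : ∀ i ∈ s, ∀ j ∈ s, i ≠ j → T i j + T j i = 0) :
    ∑ i ∈ s, ∑ j ∈ s, T i j = ∑ i ∈ s, T i i := by
  classical
  have hoff : ∑ p ∈ s.offDiag, T p.1 p.2 = 0 := by
    refine Finset.sum_involution (fun p _ => p.swap) (fun p hp => ?_) (fun p hp _ => ?_)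
      (fun p hp => by grind) (fun p _ => p.swap_swap)
    · obtain ⟨hi, hj, hij⟩ := Finset.mem_offDiag.1 hp
      exact h _ hi _ hj hij
    · obtain ⟨-, -, hij⟩ := Finset.mem_offDiag.1 hp
      exact fun hswap => hij (congrArg Prod.fst hswap).symm
  rw [← Finset.sum_product' s s T, ← Finset.diag_union_offDiag,
    Finset.sum_union (Finset.disjoint_diag_offDiag _), Finset.sum_diag, hoff, add_zero]

lemma sqC_mul_self {q : ℝ} (hq : 0 ≤ q) : sqC q * sqC q = q := by
  rw [sqC, ← Complex.ofReal_mul, Real.mul_self_sqrt hq]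

lemma sqC_zpow_mul_self {q : ℝ} (hq : 0 ≤ q) (m : ℤ) : sqC q ^ m * sqC q ^ m = (q : ℂ) ^ m := by
  rw [← mul_zpow, sqC_mul_self hq]

lemma highSum_add_single {n : ℕ} (j i : Fin n) (α : QIdx n) :
    highSum j (α + Finsupp.single i 1) = highSum j α + if j < i then 1 else 0 := by
  simp only [highSum, Finsupp.add_apply, Finsupp.single_apply, Nat.cast_add, ite_add_zero,
    Finset.sum_add_distrib]
  congr 1
  rw [Fintype.sum_eq_single i fun k hk => by simp [Ne.symm hk]]
  simp

section Operators

variable {n : ℕ} {C : Type*} [Ring C] [Algebra ℂ C] {q : ℝ}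

lemma dRC_dRC_of_lt (hq : q ≠ 0) {i j : Fin n} (hij : i < j) (f : QIdx n → C) :
    dRC q j (dRC q i f) = (q : ℂ) • dRC q i (dRC q j f) := by
  funext α
  have hj : (α + Finsupp.single i 1 : QIdx n) j = α j := by simp [hij.ne]
  have hi : (α + Finsupp.single j 1 : QIdx n) i = α i := by simp [hij.ne']
  simp only [dRC, Pi.smul_apply, smul_smul, hi, hj, highSum_add_single, if_pos hij,
    if_neg (not_lt.2 hij.le), add_zero, zpow_add_one₀ (Complex.ofReal_ne_zero.2 hq),
    add_right_comm α (Finsupp.single i 1)]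
  ring_nf

lemma dRC_DiracR_apply (e : Fin n → C) (i : Fin n) (f : QIdx n → C) (α : QIdx n) :
    dRC q i (DiracR q e f) α =
      ∑ j : Fin n, sqC q ^ ((n : ℤ) - 1 - ((j : ℕ) : ℤ)) • (e j * dRC q i (dRC q j f) α) := by
  simp only [dRC, DiracR, Finset.smul_sum, mul_smul_comm]
  exact Finset.sum_congr rfl fun j _ => smul_comm _ _ _

lemma DiracR_DiracR_apply (e : Fin n → C) (f : QIdx n → C) (α : QIdx n) :
    DiracR q e (DiracR q e f) α =
      ∑ i : Fin n, ∑ j : Fin n,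
        (sqC q ^ ((n : ℤ) - 1 - ((i : ℕ) : ℤ)) * sqC q ^ ((n : ℤ) - 1 - ((j : ℕ) : ℤ))) •
          (e i * e j * dRC q i (dRC q j f) α) := by
  simp only [DiracR, dRC_DiracR_apply, Finset.mul_sum, Finset.smul_sum, mul_smul_comm, smul_smul,
    mul_assoc]

lemma smul_mul_dRC_dRC_add_swap_eq_zero (hq : q ≠ 0) (e : Fin n → C) {i j : Fin n} (hij : i < j)
    (he : e i * e j = -((q : ℂ) • (e j * e i))) (c : ℂ) (f : QIdx n → C) (α : QIdx n) :
    c • (e i * e j * dRC q i (dRC q j f) α) + c • (e j * e i * dRC q j (dRC q i f) α) = 0 := by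
  rw [dRC_dRC_of_lt hq hij, he, Pi.smul_apply, mul_smul_comm, neg_mul, smul_mul_assoc,
    smul_neg, neg_add_cancel]

end Operators

theorem qDirac_squares_to_minus_qLaplacian_general (n : ℕ) (q : ℝ) (hq : 0 < q)
    (C : Type*) [Ring C] [Algebra ℂ C] (e : Fin n → C)
    (he1 : ∀ j, e j ^ 2 = -1)
    (he2 : ∀ i j : Fin n, i < j → e i * e j = -((q : ℂ) • (e j * e i))) :
    ∀ f : QIdx n → C, DiracR q e (DiracR q e f) = -(qLapC q f) := by
  intro f
  funext α
  rw [DiracR_DiracR_apply, Finset.sum_sum_eq_sum_diag_of_add_swap_eq_zero, Pi.neg_apply]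
  · unfold qLapC
    rw [← Finset.sum_neg_distrib]
    refine Finset.sum_congr rfl fun i _ => ?_
    rw [sqC_zpow_mul_self hq.le, ← sq, he1, neg_one_mul, smul_neg]
  · intro i _ j _ hij
    rcases hij.lt_or_gt with hlt | hgt
    · rw [mul_comm (sqC q ^ _)]
      exact smul_mul_dRC_dRC_add_swap_eq_zero hq.ne' e hlt (he2 i j hlt) _ f α
    · rw [add_comm, mul_comm (sqC q ^ _)]
      exact smul_mul_dRC_dRC_add_swap_eq_zero hq.ne' e hgt (he2 j i hgt) _ f α

/-- in the q-Clifford algebra `Cl_{0,n}^q` (with `eⱼ² = -1` and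
`eᵢeⱼ = -q eⱼeᵢ` for `i < j`), the q-Dirac operator squares to minus the q-Laplacian. -/
theorem qDirac_squares_to_minus_qLaplacian (n : ℕ) (q : ℝ) (hq : 0 < q) (hq1 : q ≠ 1)
    (C : Type*) [Ring C] [Algebra ℂ C] (e : Fin n → C)
    (he1 : ∀ j, e j ^ 2 = -1)
    (he2 : ∀ i j : Fin n, i < j → e i * e j = -((q : ℂ) • (e j * e i))) :
    ∀ f : QIdx n → C, DiracR q e (DiracR q e f) = -(qLapC q f) :=
  qDirac_squares_to_minus_qLaplacian_general n q hq C e he1 he2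
end
end

section
/- With respect to the q-Fischer inner product, the monomials are orthogonal and ⟨xᵅ, xᵅ⟩ₖ = q^{Σ_{i<j} αᵢαⱼ} [α]_q!, where [α]_q! = [α₁]_q!⋯[αₙ]_q!; and ⟨xᵅ, xᵝ⟩ₖ = 0 for α ≠ β with |α| = |β| = k. -/
/-!
Evaluation at a point is dual to differentiation: the coefficient of `(∂ᵢᴿ)^m f` at `γ` is a
multiple of the coefficient of `f` at `γ + m δᵢ`. Hence `p(∂ₙᴿ,…,∂₁ᴿ) f |_{x=0}` for `p = x^α` is a
fixed multiple of the coefficient of `x^α` in `f`. Since `∂ᵢᴿ` acts while the exponents `αⱼ`,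
`j > i`, are still present, it contributes `[αᵢ]_q! q^{αᵢ ∑_{j>i} αⱼ}`, and the product of these
is `q^{∑_{i<j} αᵢαⱼ} [α]_q!`.
-/

noncomputable section

/-- For a multi-index `α`, the operator `p(∂ₙᴿ,…,∂₁ᴿ) = (∂ₙᴿ)^{αₙ}⋯(∂₁ᴿ)^{α₁}`
for `p = x^α`, i.e. the derivatives applied in the reversed order
(`(∂₁ᴿ)^{α₁}` acting first). -/
def Dmulti {n : ℕ} (q : ℝ) (α : QIdx n) (f : QPoly n) : QPoly n :=
  (List.finRange n).foldl (fun g i => (dR q i)^[α i] g) f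

/-- The q-factorial `[m]_q! = [1]_q [2]_q ⋯ [m]_q`. -/
def qFac (q : ℝ) (m : ℕ) : ℂ := ∏ l ∈ Finset.range m, qNum q ((l : ℤ) + 1)

/-- `[α]_q! = [α₁]_q! ⋯ [αₙ]_q!`. -/
def qFacMulti {n : ℕ} (q : ℝ) (α : QIdx n) : ℂ := ∏ i : Fin n, qFac q (α i)

/-- `∑_{i<j} αᵢαⱼ`. -/
def crossExp {n : ℕ} (α : QIdx n) : ℤ :=
  ∑ i : Fin n, ∑ j : Fin n, if i < j then (α i : ℤ) * (α j : ℤ) else 0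

section FischerMonomials

variable {n : ℕ} {q : ℝ}

lemma highSum_add (i : Fin n) (β γ : QIdx n) :
    highSum i (β + γ) = highSum i β + highSum i γ := by
  simp only [highSum, Finsupp.add_apply, Nat.cast_add, ← Finset.sum_add_distrib]
  exact Finset.sum_congr rfl fun j _ => by split_ifs <;> simp

lemma highSum_eq_zero_of_forall_lt {i : Fin n} {β : QIdx n} (hβ : ∀ j, i < j → β j = 0) :
    highSum i β = 0 :=
  Finset.sum_eq_zero fun j _ => by by_cases h : i < j <;> simp [h, hβ j]

lemma highSum_single_self (i : Fin n) (m : ℕ) : highSum i (Finsupp.single i m) = 0 :=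
  highSum_eq_zero_of_forall_lt fun _ h => Finsupp.single_eq_of_ne h.ne'

lemma crossExp_eq_sum_mul_highSum (α : QIdx n) :
    crossExp α = ∑ i, (α i : ℤ) * highSum i α := by
  simp only [crossExp, highSum, Finset.mul_sum]
  exact Finset.sum_congr rfl fun i _ => Finset.sum_congr rfl fun j _ => by split_ifs <;> simp

/-- The weight `q^{highSum i}` is the same at every step because `∂ᵢᴿ` does not change the
exponents above `i`. -/
lemma dR_iterate_apply (hq : (q : ℂ) ≠ 0) (i : Fin n) (m : ℕ) (f : QPoly n) (γ : QIdx n) :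
    (dR q i)^[m] f γ = (q : ℂ) ^ ((m : ℤ) * highSum i γ) *
      (∏ l ∈ Finset.range m, qNum q ((γ i : ℤ) + l + 1)) * f (γ + Finsupp.single i m) := by
  induction m generalizing f with
  | zero => simp
  | succ m ih =>
    have hshift : highSum i (γ + Finsupp.single i m) = highSum i γ := by
      rw [highSum_add, highSum_single_self, add_zero]
    have hpoint : γ + Finsupp.single i m + Finsupp.single i 1 = γ + Finsupp.single i (m + 1) := by
      rw [add_assoc, ← Finsupp.single_add]
    rw [Function.iterate_succ_apply, ih]
    simp only [dR, hshift, hpoint, Finsupp.add_apply, Finsupp.single_eq_same,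
      Finset.prod_range_succ, Nat.cast_add, Nat.cast_succ, add_mul, one_mul, zpow_add₀ hq]
    ring

lemma filter_mem_append_singleton (α : QIdx n) {L : List (Fin n)} {i : Fin n} (hi : i ∉ L) :
    α.filter (· ∈ L ++ [i]) = α.filter (· ∈ L) + Finsupp.single i (α i) := by
  ext j
  by_cases hj : j = i
  · subst hj; simp [hi]
  · simp [Finsupp.filter_apply, hj]

lemma foldl_dR_iterate_apply (hq : (q : ℂ) ≠ 0) (α : QIdx n) (f : QPoly n) {L : List (Fin n)}
    (hL : L.Pairwise (· < ·)) (γ : QIdx n) (hγ : ∀ i ∈ L, γ i = 0) :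
    L.foldl (fun g i => (dR q i)^[α i] g) f γ =
      (q : ℂ) ^ (L.map fun i => (α i : ℤ) * highSum i (γ + α.filter (· ∈ L))).sum *
        (L.map fun i => qFac q (α i)).prod * f (γ + α.filter (· ∈ L)) := by
  induction L using List.reverseRecOn generalizing γ with
  | nil =>
    have hempty : α.filter (· ∈ ([] : List (Fin n))) = 0 := by ext; simp
    rw [hempty]
    simp
  | append_singleton L i ih =>
    obtain ⟨hL, -, hlt⟩ := List.pairwise_append.1 hL
    have hlt : ∀ j ∈ L, j < i := fun j hj => hlt j hj i (List.mem_singleton_self i)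
    have hγi : γ i = 0 := hγ i (by simp)
    have hpoint : γ + Finsupp.single i (α i) + α.filter (· ∈ L) = γ + α.filter (· ∈ L ++ [i]) := by
      rw [filter_mem_append_singleton α fun h => (hlt i h).false]
      abel
    have hhigh : highSum i γ = highSum i (γ + α.filter (· ∈ L ++ [i])) := by
      rw [highSum_add, highSum_eq_zero_of_forall_lt (β := α.filter _), add_zero]
      intro j hij
      refine Finsupp.filter_apply_neg _ _ fun hj => ?_
      rcases List.mem_append.1 hj with hj | hj
      · exact (hlt j hj).asymm hij
      · exact hij.ne' (List.mem_singleton.1 hj)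
    have hfac : ∏ l ∈ Finset.range (α i), qNum q ((γ i : ℤ) + l + 1) = qFac q (α i) := by
      simp [qFac, hγi]
    have hγ' : ∀ j ∈ L, (γ + Finsupp.single i (α i)) j = 0 := fun j hj => by
      simp [hγ j (by simp [hj]), Finsupp.single_eq_of_ne (hlt j hj).ne]
    rw [List.foldl_append, List.foldl_cons, List.foldl_nil, dR_iterate_apply hq, hfac,
      ih hL _ hγ', hpoint, hhigh]
    simp only [List.map_append, List.map_singleton, List.sum_append, List.sum_singleton,
      List.prod_append, List.prod_singleton, zpow_add₀ hq]
    ring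

theorem Dmulti_apply_zero (hq : (q : ℂ) ≠ 0) (α : QIdx n) (f : QPoly n) :
    Dmulti q α f 0 = (q : ℂ) ^ crossExp α * qFacMulti q α * f α := by
  have hα : α.filter (· ∈ List.finRange n) = α := by
    rw [Finsupp.filter_eq_self_iff]; simp
  rw [Dmulti, foldl_dR_iterate_apply hq α f (List.pairwise_lt_finRange n) 0 (by simp), zero_add, hα,
    ← Fin.sum_univ_def, ← Fin.prod_univ_def, ← crossExp_eq_sum_mul_highSum]
  rfl

end FischerMonomials

theorem monomials_fischer_orthogonal_general (n : ℕ) (q : ℝ) (hq : 0 < q)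
    (α β : QIdx n) :
    Dmulti q α (fun γ => (starRingEnd ℂ) (mono α γ)) 0
        = (q : ℂ) ^ crossExp α * qFacMulti q α ∧
    (α ≠ β → Dmulti q α (fun γ => (starRingEnd ℂ) (mono β γ)) 0 = 0) := by
  have hq0 : (q : ℂ) ≠ 0 := Complex.ofReal_ne_zero.2 hq.ne'
  refine ⟨?_, fun hne => ?_⟩
  · simp [Dmulti_apply_zero hq0, mono]
  · simp [Dmulti_apply_zero hq0, mono, hne]

/-- with respect to the q-Fischer inner product
`⟨p₁,p₂⟩ₖ = p₁(∂ₙᴿ,…,∂₁ᴿ)(p₂)*|_{x=0}`, the monomials are orthogonal with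
`⟨x^α, x^α⟩ₖ = q^{∑_{i<j} αᵢαⱼ} [α]_q!` and `⟨x^α, x^β⟩ₖ = 0` for `α ≠ β`. -/
theorem monomials_fischer_orthogonal (n : ℕ) (q : ℝ) (hq : 0 < q) (hq1 : q ≠ 1)
    (k : ℕ) (α β : QIdx n) (hα : ∑ i, α i = k) (hβ : ∑ i, β i = k) :
    Dmulti q α (fun γ => (starRingEnd ℂ) (mono α γ)) 0
        = (q : ℂ) ^ crossExp α * qFacMulti q α ∧
    (α ≠ β → Dmulti q α (fun γ => (starRingEnd ℂ) (mono β γ)) 0 = 0) :=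
  monomials_fischer_orthogonal_general n q hq α β
end
end
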